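/- Let β > 0, 0 < t < 1, and x ∈ ℝ with x ≠ 0, and set z := x/√(1−t). Then ( ∫_t^1 (1−r)^{β−1} (r−t)^{−3/2} exp(−r x²/(2t(r−t))) dr ) / ( ∫_t^1 (1−r)^{β−1} (r−t)^{−1/2} exp(−r x²/(2t(r−t))) dr ) = (1/(1−t)) · g(z), where g(z) := ( ∫_0^∞ u^{β−1} (1+u)^{1/2−β} e^{−z²u/2} du ) / ( ∫_0^∞ u^{β−1} (1+u)^{−1/2−β} e^{−z²u/2} du ), all four integrals being finite. -/

import Mathlib

open MeasureTheory Set Real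

/-!
The substitution `r = t + (1 - t) / (1 + u)` maps `(0, ∞)` onto `(t, 1)`. With
`r - t = (1 - t) / (1 + u)`, `1 - r = (1 - t) u / (1 + u)` and Jacobian `(1 - t) / (1 + u)²`, it
turns the `r`-integral with weight `(r - t) ^ e` into `(1 - t) ^ (β + e) e^{-x²/(2t(1-t))}` times
the Tricomi integral with `(1 + u) ^ (-β - e - 1)`, because
`r x² / (t (r - t)) = z² u + x² / (t (1 - t))`. In the ratio of `e = -3/2` to `e = -1/2` the
exponential cancels and the powers of `1 - t` leave `1 / (1 - t)`. The Tricomi integrands are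
integrable because `(1 + u) ^ c ≤ 2 ^ |c| (1 + u ^ |c|)` bounds them by Gamma integrands.
-/

lemma one_add_rpow_le_two_rpow_mul {u p : ℝ} (hu : 0 ≤ u) (hp : 0 ≤ p) :
    (1 + u) ^ p ≤ 2 ^ p * (1 + u ^ p) := by
  rcases le_total u 1 with hu1 | hu1
  · calc (1 + u) ^ p ≤ 2 ^ p := by gcongr; linarith
      _ ≤ 2 ^ p * (1 + u ^ p) :=
        le_mul_of_one_le_right (by positivity) (le_add_of_nonneg_right (by positivity))
  · calc (1 + u) ^ p ≤ (2 * u) ^ p := by gcongr; linarith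
      _ = 2 ^ p * u ^ p := mul_rpow zero_le_two hu
      _ ≤ 2 ^ p * (1 + u ^ p) := by gcongr; linarith

lemma integrableOn_rpow_mul_one_add_rpow_mul_exp_neg_mul {s k : ℝ} (hs : -1 < s) (hk : 0 < k)
    (c : ℝ) :
    IntegrableOn (fun u : ℝ => u ^ s * (1 + u) ^ c * exp (-k * u)) (Ioi 0) := by
  have hgamma : ∀ s' : ℝ, -1 < s' →
      IntegrableOn (fun u : ℝ => u ^ s' * exp (-k * u)) (Ioi 0) :=
    fun s' hs' => by simpa using integrableOn_rpow_mul_exp_neg_mul_rpow hs' zero_lt_one hk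
  have hbound := ((hgamma s hs).add (hgamma (s + |c|) (by linarith [abs_nonneg c]))).const_mul
    (2 ^ |c|)
  refine hbound.mono' ?_
    ((ae_restrict_iff' measurableSet_Ioi).2 (.of_forall fun u (hu : 0 < u) => ?_))
  · exact Measurable.aestronglyMeasurable (by fun_prop)
  · have hc : (1 + u) ^ c ≤ 2 ^ |c| * (1 + u ^ |c|) :=
      (rpow_le_rpow_of_exponent_le (by linarith) (le_abs_self c)).trans
        (one_add_rpow_le_two_rpow_mul hu.le (abs_nonneg c))
    rw [Real.norm_of_nonneg (by positivity), Pi.add_apply, rpow_add hu]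
    calc u ^ s * (1 + u) ^ c * exp (-k * u)
        ≤ u ^ s * (2 ^ |c| * (1 + u ^ |c|)) * exp (-k * u) := by gcongr
      _ = _ := by ring

lemma strictAntiOn_add_div_one_add {a b : ℝ} (hab : a < b) :
    StrictAntiOn (fun u : ℝ => a + (b - a) / (1 + u)) (Ioi 0) := by
  intro u (hu : 0 < u) v _ huv
  have := div_lt_div_of_pos_left (sub_pos.2 hab) (by linarith) (by linarith : 1 + u < 1 + v)
  simpa using this

lemma image_add_div_one_add_Ioi {a b : ℝ} (hab : a < b) :
    (fun u : ℝ => a + (b - a) / (1 + u)) '' Ioi 0 = Ioo a b := by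
  ext r
  constructor
  · rintro ⟨u, hu : 0 < u, rfl⟩
    have : (b - a) / (1 + u) < b - a := div_lt_self (by linarith) (by linarith)
    exact ⟨by simp only [lt_add_iff_pos_right]; positivity, by linarith⟩
  · rintro ⟨har, hrb⟩
    refine ⟨(b - r) / (r - a), div_pos (sub_pos.2 hrb) (sub_pos.2 har), ?_⟩
    have : r - a ≠ 0 := by linarith
    field_simp
    ring

lemma hasDerivAt_add_div_one_add (a b : ℝ) {u : ℝ} (hu : 1 + u ≠ 0) :
    HasDerivAt (fun u : ℝ => a + (b - a) / (1 + u)) (-(b - a) / (1 + u) ^ 2) u := by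
  have h : HasDerivAt (fun v : ℝ => (b - a) / (1 + v))
      ((0 * (1 + u) - (b - a) * 1) / (1 + u) ^ 2) u :=
    (hasDerivAt_const u (b - a)).div ((hasDerivAt_id' u).const_add 1) hu
  rw [show -(b - a) / (1 + u) ^ 2 = (0 * (1 + u) - (b - a) * 1) / (1 + u) ^ 2 by ring]
  exact h.const_add a

lemma eqOn_abs_deriv_mul_pinning_kernel {β t x z e c : ℝ} (ht0 : 0 < t) (ht1 : t < 1)
    (hz : z = x / √(1 - t)) (hc : β + e + c + 1 = 0) :
    EqOn (fun u => |-(1 - t) / (1 + u) ^ 2| * ((1 - (t + (1 - t) / (1 + u))) ^ (β - 1) *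
      (t + (1 - t) / (1 + u) - t) ^ e *
      exp (-((t + (1 - t) / (1 + u)) * x ^ 2) / (2 * t * (t + (1 - t) / (1 + u) - t)))))
    (fun u => (1 - t) ^ (β + e) * exp (-x ^ 2 / (2 * t * (1 - t))) *
      (u ^ (β - 1) * (1 + u) ^ c * exp (-(z ^ 2 * u) / 2))) (Ioi 0) := by
  intro u (hu : 0 < u)
  have h1t : 0 < 1 - t := by linarith
  have hw : 0 < 1 + u := by linarith
  have hexp : -((t + (1 - t) / (1 + u)) * x ^ 2) / (2 * t * (t + (1 - t) / (1 + u) - t)) =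
      -(z ^ 2 * u) / 2 + -x ^ 2 / (2 * t * (1 - t)) := by
    rw [hz, div_pow, sq_sqrt h1t.le, add_sub_cancel_left]
    field_simp
    ring
  have hwc : (1 + u) ^ c = ((1 + u) ^ (β - 1) * (1 + u) ^ e * (1 + u) ^ 2)⁻¹ := by
    rw [← rpow_two, ← rpow_add hw, ← rpow_add hw, ← rpow_neg hw.le]
    congr 1
    linarith
  have htc : (1 - t) ^ (β + e) = (1 - t) ^ (β - 1) * (1 - t) ^ e * (1 - t) := by
    rw [← rpow_add h1t, ← rpow_add_one h1t.ne']
    ring_nf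
  dsimp only
  rw [hexp, exp_add, abs_div, abs_neg, abs_of_pos h1t, abs_of_pos (by positivity),
    show 1 - (t + (1 - t) / (1 + u)) = (1 - t) * u / (1 + u) by field_simp; ring,
    show t + (1 - t) / (1 + u) - t = (1 - t) / (1 + u) by ring,
    div_rpow (by positivity) hw.le, mul_rpow h1t.le hu.le, div_rpow h1t.le hw.le, hwc, htc]
  field_simp

lemma integrableOn_tricomi_integrand {β z : ℝ} (hβ : 0 < β) (hz : z ≠ 0) (c : ℝ) :
    IntegrableOn (fun u : ℝ => u ^ (β - 1) * (1 + u) ^ c * exp (-(z ^ 2 * u) / 2)) (Ioi 0) := by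
  simpa only [neg_div, mul_div_right_comm, neg_mul] using
    integrableOn_rpow_mul_one_add_rpow_mul_exp_neg_mul (by linarith : -1 < β - 1)
      (by positivity : 0 < z ^ 2 / 2) c

lemma pinning_integral_eq_tricomi {β t x z e c : ℝ} (hβ : 0 < β) (ht0 : 0 < t) (ht1 : t < 1)
    (hx : x ≠ 0) (hz : z = x / √(1 - t)) (hc : β + e + c + 1 = 0) :
    IntegrableOn (fun r : ℝ => (1 - r) ^ (β - 1) * (r - t) ^ e *
      exp (-(r * x ^ 2) / (2 * t * (r - t)))) (Ioo t 1) ∧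
    ∫ r in Ioo t 1, (1 - r) ^ (β - 1) * (r - t) ^ e * exp (-(r * x ^ 2) / (2 * t * (r - t))) =
      (1 - t) ^ (β + e) * exp (-x ^ 2 / (2 * t * (1 - t))) *
        ∫ u in Ioi 0, u ^ (β - 1) * (1 + u) ^ c * exp (-(z ^ 2 * u) / 2) := by
  have hz0 : z ≠ 0 := hz ▸ div_ne_zero hx (sqrt_pos.2 (by linarith)).ne'
  have himage := image_add_div_one_add_Ioi ht1
  have hinj := (strictAntiOn_add_div_one_add ht1).injOn
  have hderiv : ∀ u ∈ Ioi (0 : ℝ), HasDerivWithinAt (fun u : ℝ => t + (1 - t) / (1 + u))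
      (-(1 - t) / (1 + u) ^ 2) (Ioi 0) u := fun u (hu : 0 < u) =>
    (hasDerivAt_add_div_one_add t 1 (by linarith)).hasDerivWithinAt
  have hkernel := eqOn_abs_deriv_mul_pinning_kernel ht0 ht1 hz hc
  rw [← himage, integrableOn_image_iff_integrableOn_abs_deriv_smul measurableSet_Ioi hderiv hinj,
    integral_image_eq_integral_abs_deriv_smul measurableSet_Ioi hderiv hinj]
  simp only [smul_eq_mul]
  rw [setIntegral_congr_fun measurableSet_Ioi hkernel, integral_const_mul]
  exact ⟨IntegrableOn.congr_fun ((integrableOn_tricomi_integrand hβ hz0 c).const_mul _)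
    hkernel.symm measurableSet_Ioi, rfl⟩

theorem beta_prior_pinning_rate_self_similar
    (β t x : ℝ) (hβ : 0 < β) (ht0 : 0 < t) (ht1 : t < 1) (hx : x ≠ 0)
    (z : ℝ) (hz : z = x / Real.sqrt (1 - t)) :
    IntegrableOn (fun r : ℝ => (1 - r) ^ (β - 1) * (r - t) ^ (-(3:ℝ)/2) *
      Real.exp (-(r * x ^ 2) / (2 * t * (r - t)))) (Set.Ioo t 1) ∧
    IntegrableOn (fun r : ℝ => (1 - r) ^ (β - 1) * (r - t) ^ (-(1:ℝ)/2) *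
      Real.exp (-(r * x ^ 2) / (2 * t * (r - t)))) (Set.Ioo t 1) ∧
    IntegrableOn (fun u : ℝ => u ^ (β - 1) * (1 + u) ^ (1/2 - β) *
      Real.exp (-(z ^ 2 * u) / 2)) (Set.Ioi 0) ∧
    IntegrableOn (fun u : ℝ => u ^ (β - 1) * (1 + u) ^ (-(1:ℝ)/2 - β) *
      Real.exp (-(z ^ 2 * u) / 2)) (Set.Ioi 0) ∧
    (∫ r in Set.Ioo t 1, (1 - r) ^ (β - 1) * (r - t) ^ (-(3:ℝ)/2) *
        Real.exp (-(r * x ^ 2) / (2 * t * (r - t)))) /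
      (∫ r in Set.Ioo t 1, (1 - r) ^ (β - 1) * (r - t) ^ (-(1:ℝ)/2) *
        Real.exp (-(r * x ^ 2) / (2 * t * (r - t)))) =
      (1 / (1 - t)) *
        ((∫ u in Set.Ioi (0:ℝ), u ^ (β - 1) * (1 + u) ^ (1/2 - β) *
            Real.exp (-(z ^ 2 * u) / 2)) /
          (∫ u in Set.Ioi (0:ℝ), u ^ (β - 1) * (1 + u) ^ (-(1:ℝ)/2 - β) *
            Real.exp (-(z ^ 2 * u) / 2))) := by
  have h1t : 0 < 1 - t := by linarith
  have hz0 : z ≠ 0 := hz ▸ div_ne_zero hx (sqrt_pos.2 h1t).ne'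
  obtain ⟨hint₃, heq₃⟩ := pinning_integral_eq_tricomi (e := -(3:ℝ)/2) (c := 1/2 - β)
    hβ ht0 ht1 hx hz (by ring)
  obtain ⟨hint₁, heq₁⟩ :=
    pinning_integral_eq_tricomi (e := -(1:ℝ)/2) (c := -(1:ℝ)/2 - β) hβ ht0 ht1 hx hz (by ring)
  refine ⟨hint₃, hint₁, integrableOn_tricomi_integrand hβ hz0 _,
    integrableOn_tricomi_integrand hβ hz0 _, ?_⟩
  have hpow : (1 - t) ^ (β + -(3:ℝ)/2) = (1 - t) ^ (β + -(1:ℝ)/2) * (1 - t)⁻¹ := by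
    rw [← rpow_neg_one, ← rpow_add h1t]
    ring_nf
  have hC : (1 - t) ^ (β + -(1:ℝ)/2) * exp (-x ^ 2 / (2 * t * (1 - t))) ≠ 0 := by positivity
  rw [heq₃, heq₁, hpow, mul_right_comm _ (1 - t)⁻¹, mul_assoc _ (1 - t)⁻¹,
    mul_div_mul_left _ _ hC, mul_div_assoc, one_div (1 - t)]
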